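/- arXiv:2306.09439 — 5 statements merged into one kernel-verified Lean document; each statement's English description precedes it below -/
import Mathlib

section
/- For s ∈ ℂ with Re(s) > -1/2, the function f_s(z) = (1-z)^s (principal branch) belongs to H²(𝔻) and is an eigenvector of the composition operator C_{φ_a} with eigenvalue a^s: f_s ∘ φ_a = a^s · f_s. -/
/-!
The eigenvector equation is the identity `1 - φ_a(z) = a (1 - z)` together with
`(a w) ^ s = a ^ s w ^ s` for real `a ≥ 0`. For membership in `H²`, the Taylor coefficients of
`(1 - z) ^ s` are `(-1) ^ n (s choose n)`, and `|(s choose n)| = |(-s)ₙ| / n!`. Euler's limit formula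
`n ^ t n! / (t)ₙ₊₁ → Γ(t)` shows `(t)ₙ / n! = O(n ^ (Re t - 1))` (for `t` a pole of `Γ` the
sequence vanishes eventually), so the squared coefficients are `O(n ^ (-2 Re s - 2))`, which is
summable exactly when `Re s > -1/2`.
-/

open Complex Metric Filter Asymptotics Finset
open scoped Nat

noncomputable def hardyCoeff (f : ℂ → ℂ) (n : ℕ) : ℂ := iteratedDeriv n f 0 / n.factorial

/-- `f` belongs to the Hardy space `H²(𝔻)`: it is holomorphic on the unit disk and its
Taylor coefficients at `0` are square-summable. -/
def MemH2 (f : ℂ → ℂ) : Prop :=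
  AnalyticOnNhd ℂ f (ball (0:ℂ) 1) ∧ Summable (fun n => ‖hardyCoeff f n‖ ^ 2)

lemma ofReal_mul_cpow {a : ℝ} (ha : 0 ≤ a) (w s : ℂ) :
    ((a : ℂ) * w) ^ s = (a : ℂ) ^ s * w ^ s := by
  rcases ha.eq_or_lt with rfl | ha
  · rcases eq_or_ne s 0 with rfl | hs <;> simp [*]
  rcases eq_or_ne w 0 with rfl | hw
  · rcases eq_or_ne s 0 with rfl | hs <;> simp [*]
  have ha' : (a : ℂ) ≠ 0 := ofReal_ne_zero.mpr ha.ne'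
  rw [cpow_def_of_ne_zero (mul_ne_zero ha' hw), cpow_def_of_ne_zero ha', cpow_def_of_ne_zero hw,
    log_ofReal_mul ha hw, ofReal_log ha.le, add_mul, exp_add]

lemma prod_add_natCast_div_factorial_eq {t : ℂ} (ht : ∀ m : ℕ, t ≠ -m) {n : ℕ} (hn : n ≠ 0) :
    (∏ j ∈ range n, (t + j)) / n ! = (n : ℂ) ^ t * ((GammaSeq t n)⁻¹ * (t + n)⁻¹) := by
  have hpow : (n : ℂ) ^ t ≠ 0 := cpow_ne_zero_iff.mpr (Or.inl (Nat.cast_ne_zero.mpr hn))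
  have htn : t + n ≠ 0 := fun h => ht n (eq_neg_of_add_eq_zero_left h)
  rw [GammaSeq, prod_range_succ, inv_div]
  field_simp

lemma isBigO_prod_add_natCast_div_factorial (t : ℂ) :
    (fun n : ℕ => (∏ j ∈ range n, (t + j)) / n !) =O[atTop] fun n => (n : ℝ) ^ (t.re - 1) := by
  by_cases ht : ∀ m : ℕ, t ≠ -m
  · have hpow : (fun n : ℕ => (n : ℂ) ^ t) =O[atTop] fun n => (n : ℝ) ^ t.re := by
      refine IsBigO.of_norm_eventuallyLE ?_
      filter_upwards [eventually_gt_atTop 0] with n hn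
      rw [norm_natCast_cpow_of_pos hn]
    have hGammaSeq : (fun n => (GammaSeq t n)⁻¹) =O[atTop] fun _ => (1 : ℝ) :=
      ((GammaSeq_tendsto_Gamma t).inv₀ (Gamma_ne_zero ht)).isBigO_one ℝ
    have hinv : (fun n : ℕ => (t + n)⁻¹) =O[atTop] fun n => (n : ℝ)⁻¹ := by
      have hnorm : Tendsto (norm ∘ fun n : ℕ => (n : ℂ)) atTop atTop :=
        tendsto_norm_atTop_iff_cobounded.mpr tendsto_natCast_atTop_cobounded
      refine (IsEquivalent.refl.const_add_of_norm_tendsto_atTop hnorm).inv.isBigO.trans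
        (IsBigO.of_norm_eventuallyLE (Eventually.of_forall fun n => ?_))
      simp
    refine (hpow.mul (hGammaSeq.mul hinv)).congr' ?_ ?_
    · filter_upwards [eventually_ne_atTop 0] with n hn
      exact (prod_add_natCast_div_factorial_eq ht hn).symm
    · filter_upwards [eventually_gt_atTop 0] with n hn
      rw [one_mul, Real.rpow_sub_one (Nat.cast_ne_zero.mpr hn.ne'), div_eq_mul_inv]
  · push Not at ht
    obtain ⟨m, rfl⟩ := ht
    refine (isBigO_zero _ _).congr' ?_ EventuallyEq.rfl
    filter_upwards [eventually_gt_atTop m] with n hn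
    rw [prod_eq_zero (mem_range.mpr hn) (neg_add_cancel _), zero_div]

lemma choose_eq_prod_div_factorial (s : ℂ) (n : ℕ) :
    Ring.choose s n = (∏ j ∈ range n, (s - j)) / n ! := by
  rw [Ring.choose_eq_smul, ← descPochhammer_eval_eq_prod_range, ← Polynomial.aeval_eq_smeval,
    ← descPochhammer_map (algebraMap ℤ ℂ), Polynomial.eval_map_algebraMap, smul_eq_mul,
    div_eq_inv_mul]

lemma isBigO_choose (s : ℂ) :
    (fun n : ℕ => Ring.choose s n) =O[atTop] fun n => (n : ℝ) ^ (-s.re - 1) := by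
  have hnorm (n : ℕ) : ‖Ring.choose s n‖ = ‖(∏ j ∈ range n, (-s + j)) / (n ! : ℂ)‖ := by
    simp only [choose_eq_prod_div_factorial, norm_div, norm_prod, neg_add_eq_sub, norm_sub_rev]
  rw [← isBigO_norm_left]
  simp only [hnorm, isBigO_norm_left]
  simpa using isBigO_prod_add_natCast_div_factorial (-s)

lemma summable_sq_norm_of_isBigO_rpow {E : Type*} [NormedAddCommGroup E] {f : ℕ → E} {p : ℝ}
    (hp : p < -1 / 2) (hf : f =O[atTop] fun n => (n : ℝ) ^ p) :
    Summable fun n => ‖f n‖ ^ 2 := by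
  refine summable_of_isBigO_nat (Real.summable_nat_rpow.mpr (by linarith : p * 2 < -1)) ?_
  refine (hf.norm_left.pow 2).congr_right fun n => ?_
  exact_mod_cast (Real.rpow_mul_natCast n.cast_nonneg p 2).symm

lemma hardyCoeff_comp_neg (f : ℂ → ℂ) (n : ℕ) :
    hardyCoeff (fun z => f (-z)) n = (-1) ^ n * hardyCoeff f n := by
  simp only [hardyCoeff, iteratedDeriv_comp_neg, neg_zero, smul_eq_mul, mul_div_assoc]

lemma hardyCoeff_one_add_cpow (s : ℂ) (n : ℕ) :
    hardyCoeff (fun z => (1 + z) ^ s) n = Ring.choose s n := by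
  have h := one_add_cpow_hasFPowerSeriesAt_zero (a := s)
  have hseries := h.analyticAt.hasFPowerSeriesAt.eq_formalMultilinearSeries h
  rw [binomialSeries, FormalMultilinearSeries.ofScalars_series_eq_iff] at hseries
  exact congrFun hseries n

lemma hardyCoeff_one_sub_cpow (s : ℂ) (n : ℕ) :
    hardyCoeff (fun z => (1 - z) ^ s) n = (-1) ^ n * Ring.choose s n := by
  simp only [sub_eq_add_neg, hardyCoeff_comp_neg (fun z => (1 + z) ^ s), hardyCoeff_one_add_cpow]

lemma memH2_one_sub_cpow {s : ℂ} (hs : -(1 / 2) < s.re) : MemH2 fun z : ℂ => (1 - z) ^ s := by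
  refine ⟨fun z hz => ?_, ?_⟩
  · have hslit : 1 - z ∈ slitPlane := by
      simpa [sub_eq_add_neg] using mem_slitPlane_of_norm_lt_one (z := -z) (by simpa using hz)
    exact (analyticAt_const.sub analyticAt_id).cpow analyticAt_const hslit
  · simp only [hardyCoeff_one_sub_cpow, norm_mul, norm_pow, norm_neg, norm_one, one_pow, one_mul]
    exact summable_sq_norm_of_isBigO_rpow (by linarith) (isBigO_choose s)

theorem fs_memH2_and_eigenvector (a : ℝ) (ha : a ∈ Set.Ioo (0:ℝ) 1)
    (s : ℂ) (hs : -(1/2) < s.re) :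
    MemH2 (fun z : ℂ => (1 - z) ^ s) ∧
    ∀ z ∈ ball (0:ℂ) 1, (1 - (a * z + 1 - a)) ^ s = (a:ℂ) ^ s * (1 - z) ^ s := by
  refine ⟨memH2_one_sub_cpow hs, fun z _ => ?_⟩
  rw [show 1 - ((a : ℂ) * z + 1 - a) = a * (1 - z) by ring, ofReal_mul_cpow ha.1.le]
end

section
/- Let a ∈ (0,1) and t = 2πi/log(a). Then the function g = f_t, g(z) = (1-z)^{2πi/log a}, satisfies g(1 - a^n) = 1 for all natural numbers n, and g is a fixed point of the composition operator C_{φ_a} (i.e., g ∘ φ_a = g). -/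
/-!
Put `t = 2πi / log a`. Since `log a * t = 2πi`, we get `a ^ t = exp (2πi) = 1`, and for positive
real `a` the principal power is multiplicative, `(a z) ^ t = a ^ t z ^ t = z ^ t`. As
`1 - φ_a z = a (1 - z)`, this says `f_t ∘ φ_a = f_t`; iterating from `1 - 0 = 1` gives
`f_t (1 - a ^ n) = (a ^ n) ^ t = 1 ^ t = 1`.
-/

open Complex Metric Real

namespace Complex

theorem ofReal_mul_cpow_of_pos {r : ℝ} (hr : 0 < r) (z w : ℂ) :
    ((r : ℂ) * z) ^ w = (r : ℂ) ^ w * z ^ w := by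
  rcases eq_or_ne z 0 with rfl | hz
  · rcases eq_or_ne w 0 with rfl | hw <;> simp [*]
  have hr' : (r : ℂ) ≠ 0 := ofReal_ne_zero.mpr hr.ne'
  rw [cpow_def_of_ne_zero (mul_ne_zero hr' hz), log_ofReal_mul hr hz, add_mul, exp_add,
    ofReal_log hr.le, ← cpow_def_of_ne_zero hr', ← cpow_def_of_ne_zero hz]

theorem ofReal_cpow_two_pi_I_div_log {a : ℝ} (ha : 0 < a) :
    (a : ℂ) ^ (2 * π * I / Real.log a) = 1 := by
  rcases eq_or_ne (Real.log a) 0 with hlog | hlog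
  · simp [hlog]
  have hlog' : (Real.log a : ℂ) ≠ 0 := ofReal_ne_zero.mpr hlog
  rw [cpow_def_of_ne_zero (ofReal_ne_zero.mpr ha.ne'), ← ofReal_log ha.le,
    mul_div_cancel₀ _ hlog', exp_two_pi_mul_I]

theorem ofReal_mul_cpow_two_pi_I_div_log {a : ℝ} (ha : 0 < a) (z : ℂ) :
    ((a : ℂ) * z) ^ (2 * π * I / Real.log a) = z ^ (2 * π * I / Real.log a) := by
  rw [ofReal_mul_cpow_of_pos ha, ofReal_cpow_two_pi_I_div_log ha, one_mul]

theorem ofReal_pow_cpow_two_pi_I_div_log {a : ℝ} (ha : 0 < a) (n : ℕ) :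
    ((a : ℂ) ^ n) ^ (2 * π * I / Real.log a) = 1 := by
  induction n with
  | zero => simp
  | succ n ih => rw [pow_succ', ofReal_mul_cpow_two_pi_I_div_log ha, ih]

end Complex

theorem ft_fixed_point (a : ℝ) (ha : a ∈ Set.Ioo (0:ℝ) 1) :
    (∀ n : ℕ, ((1:ℂ) - (1 - (a:ℂ)^n)) ^ ((2 * π * I) / (Real.log a : ℂ)) = 1) ∧
    (∀ z ∈ ball (0:ℂ) 1,
      ((1:ℂ) - (a * z + 1 - a)) ^ ((2 * π * I) / (Real.log a : ℂ))
        = ((1:ℂ) - z) ^ ((2 * π * I) / (Real.log a : ℂ))) := by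
  refine ⟨fun n => ?_, fun z _ => ?_⟩
  · rw [sub_sub_cancel, ofReal_pow_cpow_two_pi_I_div_log ha.1]
  · rw [show (1:ℂ) - (a * z + 1 - a) = a * (1 - z) by ring,
      ofReal_mul_cpow_two_pi_I_div_log ha.1]
end

section
/- If some derivative f^{(n)} (n ≥ 1) of f ∈ H²(𝔻) is bounded on a disk D_m of center 1 - a^m and radius a^m, then f is not a hypercyclic vector for the composition operator C_{φ_a}: the orbit {C_{φ_a}^k f : k ≥ 0} is not dense in H²(𝔻). -/
/-
If the orbit of `f` were dense, it would come within `1` of `g = (M + 1) z ^ n` for every `M`.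
But the `n`-th Taylor coefficient of `C_{φ_a}^k f = f ∘ φ_{a^k}` is
`(a^k)^n f^{(n)}(1 - a^k) / n!`, and `1 - a^k` lies in `D_m` once `k ≥ m`, so these coefficients
are bounded in `k`, and the `n`-th coefficient alone keeps `g` at distance at least `1`.

For this lower bound to mean anything, `f ∘ φ_c` must itself lie in `H²` (otherwise `h2Norm` is
the junk value `0`). Its Taylor coefficients arise from those of `f` through the matrix of
Bernstein weights `C(i,j) c^j (1-c)^(i-j)`, whose rows sum to `1/c` and whose columns sum to `1`,
and the Schur test bounds such a matrix on `ℓ²`.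
-/

open Complex Metric Filter

/-- The `H²` norm of `f`, computed from Taylor coefficients. -/
noncomputable def h2Norm (f : ℂ → ℂ) : ℝ := Real.sqrt (∑' n, ‖hardyCoeff f n‖ ^ 2)

/-- The  inner product. -/
noncomputable def h2Inner (f g : ℂ → ℂ) : ℂ :=
  ∑' n, hardyCoeff f n * (starRingEnd ℂ) (hardyCoeff g n)

open scoped Nat NNReal ENNReal

theorem ENNReal.two_mul_le_add_sq (a b : ℝ≥0∞) : 2 * a * b ≤ a ^ 2 + b ^ 2 := by
  rcases eq_top_or_lt_top a with rfl | ha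
  · simp
  rcases eq_top_or_lt_top b with rfl | hb
  · simp
  lift a to ℝ≥0 using ha.ne
  lift b to ℝ≥0 using hb.ne
  exact_mod_cast _root_.two_mul_le_add_sq a b

theorem ENNReal.tsum_mul_tsum {ι κ : Type*} (u : ι → ℝ≥0∞) (v : κ → ℝ≥0∞) :
    (∑' i, u i) * ∑' j, v j = ∑' i, ∑' j, u i * v j := by
  simp_rw [ENNReal.tsum_mul_left, ENNReal.tsum_mul_right]

theorem ENNReal.sq_tsum_mul_le {ι : Type*} (w f : ι → ℝ≥0∞) :
    (∑' i, w i * f i) ^ 2 ≤ (∑' i, w i) * ∑' i, w i * f i ^ 2 := by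
  have key : 2 * (∑' i, w i * f i) ^ 2 ≤ 2 * ((∑' i, w i) * ∑' i, w i * f i ^ 2) :=
    calc 2 * (∑' i, w i * f i) ^ 2
        = ∑' i, ∑' j, w i * w j * (2 * f i * f j) := by
          simp_rw [sq, ENNReal.tsum_mul_tsum, ← ENNReal.tsum_mul_left]
          exact tsum_congr fun i => tsum_congr fun j => by ring
      _ ≤ ∑' i, ∑' j, w i * w j * (f i ^ 2 + f j ^ 2) := by
          gcongr with i j; exact ENNReal.two_mul_le_add_sq _ _
      _ = (∑' i, w i * f i ^ 2) * (∑' j, w j) + (∑' i, w i) * ∑' j, w j * f j ^ 2 := by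
          simp_rw [ENNReal.tsum_mul_tsum, mul_add, ENNReal.tsum_add]
          congr 1 <;> exact tsum_congr fun i => tsum_congr fun j => by ring
      _ = 2 * ((∑' i, w i) * ∑' i, w i * f i ^ 2) := by ring
  exact (ENNReal.mul_le_mul_iff_right two_ne_zero ENNReal.ofNat_ne_top).mp key

theorem ENNReal.tsum_sq_tsum_mul_le_of_schur {ι κ : Type*} {K : κ → ι → ℝ≥0∞} {A B : ℝ≥0∞}
    (hA : ∀ j, ∑' i, K j i ≤ A) (hB : ∀ i, ∑' j, K j i ≤ B) (x : ι → ℝ≥0∞) :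
    ∑' j, (∑' i, K j i * x i) ^ 2 ≤ A * B * ∑' i, x i ^ 2 :=
  calc ∑' j, (∑' i, K j i * x i) ^ 2
      ≤ ∑' j, A * ∑' i, K j i * x i ^ 2 :=
        ENNReal.tsum_le_tsum fun j => (ENNReal.sq_tsum_mul_le _ _).trans (by gcongr; exact hA j)
    _ = A * ∑' i, (∑' j, K j i) * x i ^ 2 := by
        rw [ENNReal.tsum_mul_left, ENNReal.tsum_comm]
        simp_rw [ENNReal.tsum_mul_right]
    _ ≤ A * ∑' i, B * x i ^ 2 := by gcongr with i; exact hB i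
    _ = A * B * ∑' i, x i ^ 2 := by rw [ENNReal.tsum_mul_left, mul_assoc]

theorem summable_sq_norm_iff_tsum_sq_enorm_ne_top {ι E : Type*} [SeminormedAddCommGroup E]
    {x : ι → E} : Summable (fun i => ‖x i‖ ^ 2) ↔ ∑' i, ‖x i‖ₑ ^ 2 ≠ ∞ := by
  have h := (tsum_enorm_ne_top_iff_summable_norm (f := fun i => ‖x i‖ ^ 2)).symm
  simp only [Real.norm_eq_abs, abs_pow, abs_norm] at h
  convert h using 4 with i
  rw [enorm_pow, enorm_norm]

theorem summable_sq_norm_tsum_smul_of_schur {ι κ 𝕜 E : Type*} [NormedField 𝕜]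
    [NormedAddCommGroup E] [NormedSpace 𝕜 E] {K : κ → ι → 𝕜} {A B : ℝ≥0∞}
    (hA : ∀ j, ∑' i, ‖K j i‖ₑ ≤ A) (hB : ∀ i, ∑' j, ‖K j i‖ₑ ≤ B) (hA_top : A ≠ ∞)
    (hB_top : B ≠ ∞) {x : ι → E} (hx : Summable fun i => ‖x i‖ ^ 2) :
    Summable fun j => ‖∑' i, K j i • x i‖ ^ 2 := by
  rw [summable_sq_norm_iff_tsum_sq_enorm_ne_top] at hx ⊢
  refine ne_top_of_le_ne_top (ENNReal.mul_ne_top (ENNReal.mul_ne_top hA_top hB_top) hx) ?_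
  calc ∑' j, ‖∑' i, K j i • x i‖ₑ ^ 2
      ≤ ∑' j, (∑' i, ‖K j i‖ₑ * ‖x i‖ₑ) ^ 2 := by
        gcongr with j
        simpa only [enorm_smul] using enorm_tsum_le_tsum_enorm (f := fun i => K j i • x i)
    _ ≤ A * B * ∑' i, ‖x i‖ₑ ^ 2 := ENNReal.tsum_sq_tsum_mul_le_of_schur hA hB _

theorem iteratedDeriv_comp_mul_add {𝕜 F : Type*} [NontriviallyNormedField 𝕜]
    [NormedAddCommGroup F] [NormedSpace 𝕜 F] {f : 𝕜 → F} {c w : 𝕜} {r : ℝ} {n : ℕ}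
    (hf : ContDiffOn 𝕜 n f (ball w r)) (hr : 0 < r) (hc : ‖c‖ ≤ 1) :
    iteratedDeriv n (fun z => f (c * z + w)) 0 = c ^ n • iteratedDeriv n f w := by
  have hg : ContDiffOn 𝕜 n (fun z => f (z + w)) (ball 0 r) :=
    hf.comp (by fun_prop) fun z hz => by simpa [mem_ball, dist_eq_norm] using hz
  have hmaps : Set.MapsTo (c * ·) (ball (0 : 𝕜) r) (ball 0 r) := fun z hz => by
    simp only [mem_ball_zero_iff, norm_mul] at hz ⊢
    exact (mul_le_of_le_one_left (norm_nonneg z) hc).trans_lt hz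
  have h0 : (0 : 𝕜) ∈ ball 0 r := mem_ball_self hr
  rw [← iteratedDerivWithin_of_isOpen isOpen_ball h0,
    iteratedDerivWithin_comp_const_smul h0 isOpen_ball.uniqueDiffOn hg c hmaps, mul_zero,
    iteratedDerivWithin_of_isOpen isOpen_ball h0, iteratedDeriv_comp_add_const]
  simp only [zero_add]

theorem hardyCoeff_sub {f g : ℂ → ℂ} (hf : AnalyticAt ℂ f 0) (hg : AnalyticAt ℂ g 0) (j : ℕ) :
    hardyCoeff (f - g) j = hardyCoeff f j - hardyCoeff g j := by
  rw [hardyCoeff, iteratedDeriv_sub hf.contDiffAt hg.contDiffAt, sub_div]; rfl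

theorem hardyCoeff_const_mul_pow (b : ℂ) (n j : ℕ) :
    hardyCoeff (fun z => b * z ^ n) j = if j = n then b else 0 := by
  rw [hardyCoeff, iteratedDeriv_const_mul_field, iteratedDeriv_fun_pow_zero]
  split_ifs with h
  · subst h; simp [Nat.factorial_ne_zero]
  · simp

theorem norm_hardyCoeff_le_h2Norm {f : ℂ → ℂ} (hf : Summable fun j => ‖hardyCoeff f j‖ ^ 2)
    (n : ℕ) : ‖hardyCoeff f n‖ ≤ h2Norm f :=
  Real.le_sqrt_of_sq_le (hf.le_tsum n fun _ _ => sq_nonneg _)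

theorem Nat.lt_of_notMem_range_add_right {i j : ℕ} (hi : i ∉ Set.range (· + j)) : i < j := by
  by_contra! h
  exact hi ⟨i - j, Nat.sub_add_cancel h⟩

theorem hasSum_choose_mul_hardyCoeff {f : ℂ → ℂ} (hf : DifferentiableOn ℂ f (ball 0 1)) {w : ℂ}
    (hw : w ∈ ball 0 1) (j : ℕ) :
    HasSum (fun i => (i.choose j : ℂ) * w ^ (i - j) * hardyCoeff f i)
      (iteratedDeriv j f w / j !) := by
  have hdiff : DifferentiableOn ℂ (iteratedDeriv j f) (ball 0 1) := by
    simpa only [iteratedDeriv_eq_iterate] using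
      ((hf.analyticOnNhd isOpen_ball).iterated_deriv j).differentiableOn
  have hsum := (Complex.hasSum_taylorSeries_on_ball hdiff hw).div_const (j ! : ℂ)
  have hterm (d : ℕ) : ((d + j).choose j : ℂ) * w ^ (d + j - j) * hardyCoeff f (d + j) =
      (d ! : ℂ)⁻¹ • (w - 0) ^ d • iteratedDeriv d (iteratedDeriv j f) 0 / j ! := by
    simp only [Nat.add_sub_cancel, sub_zero, hardyCoeff, smul_eq_mul,
      iteratedDeriv_eq_iterate, ← Function.iterate_add_apply]
    have hchoose : ((d + j).choose j : ℂ) ≠ 0 := by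
      exact_mod_cast (Nat.choose_pos (by omega)).ne'
    rw [← Nat.add_choose_mul_factorial_mul_factorial d j]
    push_cast
    field_simp
  rw [← (add_left_injective j).hasSum_iff fun i hi => ?_]
  · simpa only [Function.comp_def, hterm] using hsum
  · simp [Nat.choose_eq_zero_of_lt (Nat.lt_of_notMem_range_add_right hi)]

/-- Since `(c z + 1 - c) ^ i = ∑ j, binomialKernel c j i * z ^ j`, this is the matrix of
`f ↦ f (c z + 1 - c)` in the monomial basis. -/
def binomialKernel (c : ℝ) (j i : ℕ) : ℝ := i.choose j * c ^ j * (1 - c) ^ (i - j)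

section binomialKernel

variable {c : ℝ}

theorem binomialKernel_nonneg (hc0 : 0 ≤ c) (hc1 : c ≤ 1) (j i : ℕ) :
    0 ≤ binomialKernel c j i := by
  have : 0 ≤ 1 - c := by linarith
  unfold binomialKernel; positivity

theorem hasSum_binomialKernel (hc0 : 0 < c) (hc2 : c < 2) (j : ℕ) :
    HasSum (binomialKernel c j) c⁻¹ := by
  have hr : ‖1 - c‖ < 1 := by rw [Real.norm_eq_abs, abs_lt]; constructor <;> linarith
  have h := (hasSum_choose_mul_geometric_of_norm_lt_one j hr).mul_left (c ^ j)
  rw [sub_sub_cancel, pow_succ, one_div, mul_inv, ← mul_assoc, mul_inv_cancel₀ (by positivity),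
    one_mul] at h
  rw [← (add_left_injective j).hasSum_iff fun i hi => ?_]
  · refine h.congr_fun fun d => ?_
    rw [Function.comp_apply, binomialKernel, Nat.add_sub_cancel]
    ring
  · simp [binomialKernel, Nat.choose_eq_zero_of_lt (Nat.lt_of_notMem_range_add_right hi)]

theorem hasSum_binomialKernel_swap (c : ℝ) (i : ℕ) :
    HasSum (fun j => binomialKernel c j i) 1 := by
  have h : HasSum (fun j => binomialKernel c j i)
      (∑ j ∈ Finset.range (i + 1), binomialKernel c j i) :=
    hasSum_sum_of_ne_finset_zero fun j hj => ?_
  · have hbinom : ∑ j ∈ Finset.range (i + 1), binomialKernel c j i = (c + (1 - c)) ^ i := by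
      rw [add_pow]
      exact Finset.sum_congr rfl fun j _ => by rw [binomialKernel]; ring
    rwa [hbinom, add_sub_cancel, one_pow] at h
  · simp [binomialKernel, Nat.choose_eq_zero_of_lt (by simpa using hj : i < j)]

end binomialKernel

section composition

variable {f : ℂ → ℂ} {c : ℝ}

theorem ball_one_sub_subset_ball_zero_one (hc1 : c ≤ 1) : ball (1 - (c : ℂ)) c ⊆ ball 0 1 := by
  refine ball_subset_ball' (le_of_eq ?_)
  rw [dist_zero_right, ← ofReal_one, ← ofReal_sub, norm_real, Real.norm_of_nonneg (by linarith)]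
  ring

theorem mapsTo_mul_add_one_sub (hc0 : 0 < c) :
    Set.MapsTo (fun z : ℂ => c * z + 1 - c) (ball 0 1) (ball (1 - c) c) := fun z hz => by
  rw [mem_ball_zero_iff] at hz
  rw [mem_ball, dist_eq_norm, show (c : ℂ) * z + 1 - c - (1 - c) = c * z by ring, norm_mul,
    norm_real, Real.norm_of_nonneg hc0.le]
  exact mul_lt_of_lt_one_right hc0 hz

theorem hardyCoeff_comp_mul_add_one_sub (hf : AnalyticOnNhd ℂ f (ball 0 1)) (hc0 : 0 < c)
    (hc1 : c ≤ 1) (j : ℕ) :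
    hardyCoeff (fun z => f (c * z + 1 - c)) j = c ^ j * (iteratedDeriv j f (1 - c) / j !) := by
  simp_rw [add_sub_assoc]
  rw [hardyCoeff, iteratedDeriv_comp_mul_add (hf.contDiffOn_of_completeSpace.mono
    (ball_one_sub_subset_ball_zero_one hc1)) hc0, smul_eq_mul, mul_div_assoc]
  rwa [norm_real, Real.norm_of_nonneg hc0.le]

theorem hardyCoeff_comp_mul_add_one_sub_eq_tsum (hf : AnalyticOnNhd ℂ f (ball 0 1))
    (hc0 : 0 < c) (hc1 : c ≤ 1) (j : ℕ) :
    hardyCoeff (fun z => f (c * z + 1 - c)) j = ∑' i, binomialKernel c j i • hardyCoeff f i := by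
  have hw : 1 - (c : ℂ) ∈ ball 0 1 :=
    ball_one_sub_subset_ball_zero_one hc1 (mem_ball_self hc0)
  rw [hardyCoeff_comp_mul_add_one_sub hf hc0 hc1,
    ← ((hasSum_choose_mul_hardyCoeff hf.differentiableOn hw j).mul_left _).tsum_eq]
  refine tsum_congr fun i => ?_
  rw [binomialKernel, Complex.real_smul]
  push_cast
  ring

theorem MemH2.comp_mul_add_one_sub (hf : MemH2 f) (hc0 : 0 < c) (hc1 : c ≤ 1) :
    MemH2 (fun z => f (c * z + 1 - c)) := by
  refine ⟨hf.1.comp (fun z _ => by fun_prop) (mapsTo_mul_add_one_sub hc0 |>.mono_right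
    (ball_one_sub_subset_ball_zero_one hc1)), ?_⟩
  have hK := binomialKernel_nonneg hc0.le hc1
  have tsum_enorm {g : ℕ → ℝ} {s : ℝ} (hg : ∀ i, 0 ≤ g i) (h : HasSum g s) :
      ∑' i, ‖g i‖ₑ = ENNReal.ofReal s := by
    simp_rw [Real.enorm_of_nonneg (hg _)]
    rw [← ENNReal.ofReal_tsum_of_nonneg hg h.summable, h.tsum_eq]
  simp_rw [hardyCoeff_comp_mul_add_one_sub_eq_tsum hf.1 hc0 hc1]
  exact summable_sq_norm_tsum_smul_of_schur
    (fun j => (tsum_enorm (hK j) (hasSum_binomialKernel hc0 (by linarith) j)).le)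
    (fun i => (tsum_enorm (hK · i) (hasSum_binomialKernel_swap c i)).le)
    ENNReal.ofReal_ne_top ENNReal.ofReal_ne_top hf.2

end composition

theorem MemH2.sub {f g : ℂ → ℂ} (hf : MemH2 f) (hg : MemH2 g) : MemH2 (f - g) := by
  have h0 : (0 : ℂ) ∈ ball 0 1 := mem_ball_self one_pos
  refine ⟨hf.1.sub hg.1, ?_⟩
  simp_rw [hardyCoeff_sub (hf.1 0 h0) (hg.1 0 h0)]
  refine .of_nonneg_of_le (fun _ => sq_nonneg _) (fun j => ?_) ((hf.2.add hg.2).mul_left 2)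
  calc ‖hardyCoeff f j - hardyCoeff g j‖ ^ 2 ≤ (‖hardyCoeff f j‖ + ‖hardyCoeff g j‖) ^ 2 := by
        gcongr; exact norm_sub_le _ _
    _ ≤ 2 * (‖hardyCoeff f j‖ ^ 2 + ‖hardyCoeff g j‖ ^ 2) := add_sq_le

theorem memH2_const_mul_pow (b : ℂ) (n : ℕ) : MemH2 (fun z => b * z ^ n) := by
  refine ⟨fun z _ => by fun_prop, summable_of_ne_finset_zero (s := {n}) fun j hj => ?_⟩
  simp [hardyCoeff_const_mul_pow, Finset.mem_singleton.not.mp hj]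
theorem bddAbove_norm_hardyCoeff_orbit {f : ℂ → ℂ} (hf : AnalyticOnNhd ℂ f (ball 0 1)) {a : ℝ}
    (ha : a ∈ Set.Ioo (0 : ℝ) 1) {n m : ℕ} {C : ℝ}
    (hC : ∀ z ∈ ball (1 - (a : ℂ) ^ m) (a ^ m), ‖iteratedDeriv n f z‖ ≤ C) :
    BddAbove (Set.range fun k =>
      ‖hardyCoeff (fun z => f ((a : ℂ) ^ k * z + 1 - (a : ℂ) ^ k)) n‖) := by
  refine (isBoundedUnder_of_eventually_le (a := C)
    (eventually_atTop.2 ⟨m, fun k hkm => ?_⟩)).bddAbove_range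
  have hk0 : 0 < a ^ k := pow_pos ha.1 k
  have hk1 : a ^ k ≤ 1 := pow_le_one₀ ha.1.le ha.2.le
  have hkm : a ^ k ≤ a ^ m := pow_le_pow_of_le_one ha.1.le ha.2.le hkm
  have hcenter : 1 - ((a ^ k : ℝ) : ℂ) ∈ ball (1 - (a : ℂ) ^ m) (a ^ m) := by
    rw [mem_ball, dist_eq_norm,
      show 1 - ((a ^ k : ℝ) : ℂ) - (1 - (a : ℂ) ^ m) = ((a ^ m - a ^ k : ℝ) : ℂ) by push_cast; ring,
      norm_real, Real.norm_of_nonneg (sub_nonneg.2 hkm)]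
    linarith
  simp only [← ofReal_pow]
  rw [hardyCoeff_comp_mul_add_one_sub hf hk0 hk1, norm_mul, norm_div, norm_pow, norm_real,
    Real.norm_of_nonneg hk0.le, norm_natCast]
  calc (a ^ k) ^ n * (‖iteratedDeriv n f (1 - ((a ^ k : ℝ) : ℂ))‖ / n !)
      ≤ 1 * (‖iteratedDeriv n f (1 - ((a ^ k : ℝ) : ℂ))‖ / 1) := by
        gcongr
        · exact pow_le_one₀ hk0.le hk1
        · exact_mod_cast n.factorial_pos
    _ ≤ C := by simpa using hC _ hcenter

theorem not_hypercyclic_of_deriv_EB_general (a : ℝ) (ha : a ∈ Set.Ioo (0:ℝ) 1)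
    (f : ℂ → ℂ) (hf : MemH2 f) (n : ℕ) (m : ℕ) (C : ℝ)
    (hC : ∀ z ∈ ball (1 - ((a:ℂ))^m) (a^m), ‖iteratedDeriv n f z‖ ≤ C) :
    ¬ (∀ g : ℂ → ℂ, MemH2 g → ∀ ε > 0, ∃ k : ℕ,
        h2Norm (g - fun z => f ((a:ℂ)^k * z + 1 - (a:ℂ)^k)) < ε) := by
  intro hdense
  set F : ℕ → ℂ → ℂ := fun k z => f ((a : ℂ) ^ k * z + 1 - (a : ℂ) ^ k)
  have hF (k : ℕ) : MemH2 (F k) := by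
    simpa only [ofReal_pow] using
      hf.comp_mul_add_one_sub (pow_pos ha.1 k) (pow_le_one₀ ha.1.le ha.2.le)
  obtain ⟨M, hM⟩ := bddAbove_norm_hardyCoeff_orbit hf.1 ha hC
  set g : ℂ → ℂ := fun z => ((M + 1 : ℝ) : ℂ) * z ^ n
  have hg : MemH2 g := memH2_const_mul_pow _ n
  obtain ⟨k, hk⟩ : ∃ k, h2Norm (g - F k) < 1 := hdense g hg 1 one_pos
  have hMk : ‖hardyCoeff (F k) n‖ ≤ M := hM ⟨k, rfl⟩
  have hlower := norm_hardyCoeff_le_h2Norm (hg.sub (hF k)).2 n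
  rw [hardyCoeff_sub (hg.1 0 (mem_ball_self one_pos)) ((hF k).1 0 (mem_ball_self one_pos)),
    hardyCoeff_const_mul_pow, if_pos rfl] at hlower
  have hgap := norm_sub_norm_le ((M + 1 : ℝ) : ℂ) (hardyCoeff (F k) n)
  rw [norm_real, Real.norm_of_nonneg (by linarith [(norm_nonneg _).trans hMk])] at hgap
  linarith

theorem not_hypercyclic_of_deriv_EB (a : ℝ) (ha : a ∈ Set.Ioo (0:ℝ) 1)
    (f : ℂ → ℂ) (hf : MemH2 f) (n : ℕ) (hn : 1 ≤ n) (m : ℕ) (C : ℝ)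
    (hC : ∀ z ∈ ball (1 - ((a:ℂ))^m) (a^m), ‖iteratedDeriv n f z‖ ≤ C) :
    ¬ (∀ g : ℂ → ℂ, MemH2 g → ∀ ε > 0, ∃ k : ℕ,
        h2Norm (g - fun z => f ((a:ℂ)^k * z + 1 - (a:ℂ)^k)) < ε) :=
  not_hypercyclic_of_deriv_EB_general a ha f hf n m C hC
end

section
/- Let f ∈ H²(𝔻) have finitely many but at least one zero in 𝔻, and let a ∈ (0,1). Then there exists n₀ such that for every n ≥ n₀ the functions f and f ∘ φ_{a^n} are linearly independent; consequently dim K_f ≥ 2. -/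
open Complex Metric Filter

/-!
The zeros of `f` in `𝔻` are finitely many, so they lie in a disc of radius `r < 1`. The map
`φ_b z = b z + 1 - b` sends `𝔻` into `{1 - 2b ≤ |w| < 1}`, which misses that disc once `b = aⁿ`
is small; then `f ∘ φ_{aⁿ}` has no zero in `𝔻` while `f` has one, so the two functions are
not proportional.
-/

theorem linearIndependent_pair_of_eq_zero_of_ne_zero {K X : Type*} [Field K] {f g : X → K}
    {x : X} (hf : f ≠ 0) (hfx : f x = 0) (hgx : g x ≠ 0) : LinearIndependent K ![f, g] := by
  rw [LinearIndependent.pair_iff' hf]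
  intro c hcfg
  apply hgx
  rw [← hcfg, Pi.smul_apply, hfx, smul_zero]

theorem two_le_rank_span_of_linearIndependent_pair {K V : Type*} [DivisionRing K]
    [AddCommGroup V] [Module K V] {s : Set V} {x y : V} (hxy : LinearIndependent K ![x, y])
    (hx : x ∈ s) (hy : y ∈ s) : 2 ≤ Module.rank K (Submodule.span K s) := by
  have hrange : Set.range ![x, y] ⊆ s := by
    rintro _ ⟨i, rfl⟩
    fin_cases i
    exacts [hx, hy]
  calc (2 : Cardinal) = Module.rank K (Submodule.span K (Set.range ![x, y])) := by
        rw [rank_span hxy, ← Cardinal.lift_inj.{_, 0},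
          Cardinal.mk_range_eq_of_injective hxy.injective]
        simp
    _ ≤ Module.rank K (Submodule.span K s) := Submodule.rank_mono (Submodule.span_mono hrange)

theorem exists_zero_free_annulus {f : ℂ → ℂ} (hfin : {z ∈ ball (0:ℂ) 1 | f z = 0}.Finite) :
    ∃ r < 1, ∀ w, r ≤ ‖w‖ → ‖w‖ < 1 → f w ≠ 0 := by
  obtain ⟨r, hr1, hzeros⟩ :=
    exists_lt_subset_ball hfin.isClosed fun z hz => hz.1
  refine ⟨r, hr1, fun w hrw hw1 hfw => ?_⟩
  have : ‖w‖ < r := mem_ball_zero_iff.mp (hzeros ⟨mem_ball_zero_iff.mpr hw1, hfw⟩)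
  linarith

section shift

variable {b : ℝ} {z : ℂ}

theorem norm_shift_lt_one (hb0 : 0 < b) (hb1 : b ≤ 1) (hz : ‖z‖ < 1) :
    ‖(b:ℂ) * z + 1 - b‖ < 1 :=
  calc ‖(b:ℂ) * z + 1 - b‖ = ‖(b:ℂ) * z + ((1 - b : ℝ) : ℂ)‖ := by push_cast; ring_nf
    _ ≤ b * ‖z‖ + (1 - b) := by
        grw [norm_add_le, norm_mul, norm_real, norm_real, Real.norm_of_nonneg hb0.le,
          Real.norm_of_nonneg (by linarith)]
    _ < 1 := by nlinarith

theorem one_sub_two_mul_le_norm_shift (hb0 : 0 ≤ b) (hz : ‖z‖ ≤ 1) :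
    1 - 2 * b ≤ ‖(b:ℂ) * z + 1 - b‖ := by
  have h1z : ‖1 - z‖ ≤ 2 := (norm_sub_le _ _).trans (by rw [norm_one]; linarith)
  calc 1 - 2 * b ≤ ‖(1 : ℂ)‖ - ‖(b:ℂ) * (1 - z)‖ := by
        rw [norm_one, norm_mul, norm_real, Real.norm_of_nonneg hb0]; nlinarith
    _ ≤ ‖1 - (b:ℂ) * (1 - z)‖ := norm_sub_norm_le _ _
    _ = ‖(b:ℂ) * z + 1 - b‖ := by ring_nf

end shift

theorem eventually_comp_shift_ne_zero {a : ℝ} (ha : a ∈ Set.Ioo (0:ℝ) 1) {f : ℂ → ℂ}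
    (hfin : {z ∈ ball (0:ℂ) 1 | f z = 0}.Finite) :
    ∀ᶠ n : ℕ in atTop, ∀ z ∈ ball (0:ℂ) 1, f ((a:ℂ)^n * z + 1 - (a:ℂ)^n) ≠ 0 := by
  obtain ⟨r, hr1, hfree⟩ := exists_zero_free_annulus hfin
  have hsmall : ∀ᶠ n : ℕ in atTop, a ^ n < (1 - r) / 2 :=
    (tendsto_pow_atTop_nhds_zero_of_lt_one ha.1.le ha.2).eventually_lt_const (by linarith)
  filter_upwards [hsmall] with n hn z hz
  have hb0 : 0 < a ^ n := pow_pos ha.1 n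
  have hz1 : ‖z‖ < 1 := mem_ball_zero_iff.mp hz
  rw [← ofReal_pow]
  refine hfree _ ?_ (norm_shift_lt_one hb0 (pow_le_one₀ ha.1.le ha.2.le) hz1)
  linarith [one_sub_two_mul_le_norm_shift hb0.le hz1.le]

theorem finitely_many_zeros_dim_ge_two_general (a : ℝ) (ha : a ∈ Set.Ioo (0:ℝ) 1)
    (f : ℂ → ℂ)
    (hfin : {z ∈ ball (0:ℂ) 1 | f z = 0}.Finite)
    (hex : ∃ z ∈ ball (0:ℂ) 1, f z = 0) :
    (∃ n₀ : ℕ, ∀ n ≥ n₀,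
      LinearIndependent ℂ ![f, fun z => f ((a:ℂ)^n * z + 1 - (a:ℂ)^n)]) ∧
    2 ≤ Module.rank ℂ (Submodule.span ℂ {h : ℂ → ℂ | ∃ k : ℕ,
        h = fun z => f ((a:ℂ)^k * z + 1 - (a:ℂ)^k)}) := by
  obtain ⟨z₀, hz₀, hfz₀⟩ := hex
  obtain ⟨n₀, hn₀⟩ := eventually_atTop.mp (eventually_comp_shift_ne_zero ha hfin)
  have hindep : ∀ n ≥ n₀,
      LinearIndependent ℂ ![f, fun z => f ((a:ℂ)^n * z + 1 - (a:ℂ)^n)] := fun n hn =>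
    have hf : f ≠ 0 := fun h => hn₀ n hn 0 (mem_ball_self one_pos) (congrFun h _)
    linearIndependent_pair_of_eq_zero_of_ne_zero hf hfz₀ (hn₀ n hn z₀ hz₀)
  refine ⟨⟨n₀, hindep⟩, two_le_rank_span_of_linearIndependent_pair (hindep n₀ le_rfl) ⟨0, ?_⟩
    ⟨n₀, rfl⟩⟩
  simp

theorem finitely_many_zeros_dim_ge_two (a : ℝ) (ha : a ∈ Set.Ioo (0:ℝ) 1)
    (f : ℂ → ℂ) (hf : MemH2 f)
    (hfin : {z ∈ ball (0:ℂ) 1 | f z = 0}.Finite)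
    (hex : ∃ z ∈ ball (0:ℂ) 1, f z = 0) :
    (∃ n₀ : ℕ, ∀ n ≥ n₀,
      LinearIndependent ℂ ![f, fun z => f ((a:ℂ)^n * z + 1 - (a:ℂ)^n)]) ∧
    2 ≤ Module.rank ℂ (Submodule.span ℂ {h : ℂ → ℂ | ∃ k : ℕ,
        h = fun z => f ((a:ℂ)^k * z + 1 - (a:ℂ)^k)}) :=
  finitely_many_zeros_dim_ge_two_general a ha f hfin hex
end

section
/- Let a = 1/2 and s = 2πi/log(1/2). The function f = 1 + (1-z)^s is a fixed point of C_{φ_{1/2}} (so K_f is one-dimensional) and f has infinitely many zeros in 𝔻: f(φ_{(1/2)^n}(1 - √2)) = 0 for all n ∈ ℕ. -/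
open Complex Metric Real

theorem fixed_point_with_infinitely_many_zeros :
    (∀ z ∈ ball (0:ℂ) 1,
      1 + (1 - ((1/2 : ℝ) * z + 1 - 1/2)) ^ ((2 * (π:ℂ) * I) / (Real.log (1/2) : ℂ))
        = 1 + (1 - z) ^ ((2 * (π:ℂ) * I) / (Real.log (1/2) : ℂ))) ∧
    (∀ n : ℕ, 1 ≤ n → (1 - (Real.sqrt 2 : ℂ) * (1/2 : ℂ)^n) ∈ ball (0:ℂ) 1) ∧
    (∀ n : ℕ,
      1 + (1 - (1 - (Real.sqrt 2 : ℂ) * (1/2 : ℂ)^n)) ^ ((2 * (π:ℂ) * I) / (Real.log (1/2) : ℂ))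
        = 0) := by
  have hl2 : Real.log 2 ≠ 0 := ne_of_gt (Real.log_pos (by norm_num))
  have hL : Real.log (1/2) = -Real.log 2 := by
    rw [one_div, Real.log_inv]
  have hLne : (Real.log (1/2) : ℂ) ≠ 0 := by
    rw [hL]
    simpa using Complex.ofReal_ne_zero.mpr (neg_ne_zero.mpr hl2)
  set s : ℂ := (2 * (π:ℂ) * I) / (Real.log (1/2) : ℂ) with hs
  refine ⟨?_, ?_, ?_⟩
  · intro z hz
    have h1z : (1 : ℂ) - z ≠ 0 := by
      intro h
      have : z = 1 := by linear_combination -h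
      rw [this] at hz
      simp at hz
    have hbase : (1 : ℂ) - ((1/2 : ℝ) * z + 1 - 1/2) = ((1/2 : ℝ) : ℂ) * (1 - z) := by
      push_cast; ring
    rw [hbase]
    congr 1
    have hne : ((1/2 : ℝ) : ℂ) * (1 - z) ≠ 0 := by
      apply mul_ne_zero _ h1z
      norm_num
    rw [Complex.cpow_def_of_ne_zero hne, Complex.cpow_def_of_ne_zero h1z,
      Complex.log_ofReal_mul (by norm_num : (0:ℝ) < 1/2) h1z, add_mul, Complex.exp_add]
    have : ((Real.log (1/2) : ℂ)) * s = 2 * (π:ℂ) * I := by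
      rw [hs, mul_div_cancel₀ _ hLne]
    rw [this]
    have : Complex.exp (2 * (π:ℂ) * I) = 1 := by
      simpa [mul_comm, mul_assoc] using Complex.exp_int_mul_two_pi_mul_I 1
    rw [this, one_mul]
  · intro n hn
    have hpow : ((1/2 : ℂ))^n = (((1/2 : ℝ)^n : ℝ) : ℂ) := by push_cast; ring
    have heq : (1 : ℂ) - (Real.sqrt 2 : ℂ) * (1/2 : ℂ)^n
        = (((1 - Real.sqrt 2 * (1/2:ℝ)^n : ℝ)) : ℂ) := by
      rw [hpow]; push_cast; ring
    rw [mem_ball, dist_zero_right, heq, Complex.norm_real, Real.norm_eq_abs]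
    rw [abs_lt]
    have hs2 : (1:ℝ) < Real.sqrt 2 := by
      have := Real.sqrt_lt_sqrt (by norm_num) (by norm_num : (1:ℝ) < 2)
      simpa using this
    have hs2' : Real.sqrt 2 < 2 := by
      have := Real.sqrt_lt_sqrt (by norm_num) (by norm_num : (2:ℝ) < 4)
      have h4 : Real.sqrt 4 = 2 := by
        rw [show (4:ℝ) = 2^2 by norm_num, Real.sqrt_sq (by norm_num)]
      linarith [this, h4.le]
    have hp1 : (0:ℝ) < (1/2:ℝ)^n := by positivity
    have hp2 : (1/2:ℝ)^n ≤ 1/2 := by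
      calc (1/2:ℝ)^n ≤ (1/2:ℝ)^1 :=
        pow_le_pow_of_le_one (by norm_num) (by norm_num) hn
      _ = 1/2 := pow_one _
    constructor
    · nlinarith
    · nlinarith
  · intro n
    have hr : (0:ℝ) < Real.sqrt 2 * (1/2:ℝ)^n := by positivity
    have heq : (1 : ℂ) - (1 - (Real.sqrt 2 : ℂ) * (1/2 : ℂ)^n)
        = (((Real.sqrt 2 * (1/2:ℝ)^n : ℝ)) : ℂ) := by push_cast; ring
    rw [heq]
    have hne : (((Real.sqrt 2 * (1/2:ℝ)^n : ℝ)) : ℂ) ≠ 0 := by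
      exact_mod_cast ne_of_gt hr
    rw [Complex.cpow_def_of_ne_zero hne, ← Complex.ofReal_log hr.le]
    have hlogr : Real.log (Real.sqrt 2 * (1/2:ℝ)^n)
        = Real.log 2 / 2 - n * Real.log 2 := by
      rw [Real.log_mul (by positivity) (by positivity), Real.log_pow,
        Real.log_sqrt (by norm_num), hL]
      ring
    have key : ((Real.log (Real.sqrt 2 * (1/2:ℝ)^n) : ℝ) : ℂ) * s
        = ((n:ℤ) : ℂ) * (2 * (π:ℂ) * I) - π * I := by
      have hl2c : (Real.log 2 : ℂ) ≠ 0 := by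
        simpa using (Complex.ofReal_ne_zero.mpr hl2)
      have hc : Complex.log 2 ≠ 0 := by
        rw [show (2:ℂ) = ((2:ℝ):ℂ) by norm_num, ← Complex.ofReal_log (by norm_num)]
        exact_mod_cast hl2
      rw [hlogr, hs, hL]
      push_cast
      field_simp [hc]
      ring
    rw [key, Complex.exp_sub, Complex.exp_int_mul_two_pi_mul_I, Complex.exp_pi_mul_I]
    norm_num
end
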